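/- (Proposition 3) Let σ₁, σ₂ : GL(n,ℝ) → G₂(n) be two group homomorphisms satisfying π∘σ₁ = id and π∘σ₂ = id. Then there exists an element k ∈ K₂,₁(n) (a kernel element (I,c)) such that σ₁(GL(n,ℝ)) = k · σ₂(GL(n,ℝ)) · k⁻¹, i.e. the images of the two splittings are conjugate subgroups of G₂(n) by an element of the kernel of π. -/

import Mathlib

/-! The second components `Γ a = (σ a).2` of a splitting form a 1-cocycle,
`Γ (a * b) = a · Γ b + Γ a ∘ b`. Every such cocycle is a coboundary because of the centre of
`GL(n)`: `2 • 1` commutes with every `a` but acts on arrays with weight `2 - 2 ^ 2 ≠ 0`, and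
comparing `Γ ((2 • 1) * a)` with `Γ (a * (2 • 1))` gives `Γ a = c ∘ a - a · c` for
`c = Γ (2 • 1) / 2`. Conjugation by the kernel element `(I, c)` adds exactly `c ∘ a - a · c` to
the second component, so conjugating by the difference of the two potentials carries one image
onto the other. -/

open Matrix BigOperators

noncomputable section

/-- n×n real matrices (first component of a 2-jet). -/
abbrev Mat (n : ℕ) := Matrix (Fin n) (Fin n) ℝ

/-- Real arrays a^i_{jk} (second component of a 2-jet). -/
abbrev Arr (n : ℕ) := Fin n → Fin n → Fin n → ℝ

/-- An element of the model of G₂(n): a pair (a₁, a₂). -/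
abbrev Jet (n : ℕ) := Mat n × Arr n

/-- Symmetry of an array in its two lower indices. -/
def SymArr {n : ℕ} (c : Arr n) : Prop := ∀ i j k, c i j k = c i k j

/-- Membership in G₂(n): invertible first component, symmetric second component. -/
def IsJet {n : ℕ} (a : Jet n) : Prop := IsUnit a.1 ∧ SymArr a.2

/-- The multiplication of G₂(n):
`(a·b)₁ = a₁ b₁`, `(a·b)₂^i_{jk} = Σ_s a₁^i_s b₂^s_{jk} + Σ_{s,t} a₂^i_{st} b₁^s_j b₁^t_k`. -/
def jmul {n : ℕ} (a b : Jet n) : Jet n :=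
  (a.1 * b.1,
   fun i j k => (∑ s, a.1 i s * b.2 s j k) + ∑ s, ∑ t, a.2 i s t * b.1 s j * b.1 t k)

/-- The identity candidate (I, 0). -/
def jone (n : ℕ) : Jet n := ((1 : Mat n), fun _ _ _ => 0)

namespace Arr

variable {n : ℕ}

def mulLeft (a : Mat n) (X : Arr n) : Arr n :=
  fun i j k => ∑ s, a i s * X s j k

def pullback (X : Arr n) (b : Mat n) : Arr n :=
  fun i j k => ∑ s, ∑ t, X i s t * b s j * b t k

theorem mulLeft_smul_one (r : ℝ) (X : Arr n) : mulLeft (r • 1) X = r • X := by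
  funext i j k
  simp [mulLeft, Matrix.one_apply]

theorem pullback_smul_one (r : ℝ) (X : Arr n) : pullback X (r • 1) = r ^ 2 • X := by
  funext i j k
  simp [pullback, Matrix.one_apply]
  ring

theorem mulLeft_smul (a : Mat n) (r : ℝ) (X : Arr n) :
    mulLeft a (r • X) = r • mulLeft a X := by
  funext i j k
  simp only [mulLeft, Pi.smul_apply, smul_eq_mul, Finset.mul_sum]
  exact Finset.sum_congr rfl fun _ _ => by ring

theorem pullback_smul (r : ℝ) (X : Arr n) (b : Mat n) :
    pullback (r • X) b = r • pullback X b := by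
  funext i j k
  simp only [pullback, Pi.smul_apply, smul_eq_mul, Finset.mul_sum]
  exact Finset.sum_congr rfl fun _ _ => Finset.sum_congr rfl fun _ _ => by ring

theorem mulLeft_sub (a : Mat n) (X Y : Arr n) :
    mulLeft a (X - Y) = mulLeft a X - mulLeft a Y := by
  funext i j k
  simp [mulLeft, mul_sub]

theorem pullback_sub (X Y : Arr n) (b : Mat n) :
    pullback (X - Y) b = pullback X b - pullback Y b := by
  funext i j k
  simp [pullback, sub_mul]

theorem mulLeft_one (X : Arr n) : mulLeft 1 X = X := by
  simpa using mulLeft_smul_one 1 X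

theorem pullback_one (X : Arr n) : pullback X 1 = X := by
  simpa using pullback_smul_one 1 X

theorem mulLeft_neg (a : Mat n) (X : Arr n) : mulLeft a (-X) = -mulLeft a X := by
  simpa using mulLeft_smul a (-1) X

end Arr

open Arr

theorem jmul_def {n : ℕ} (a b : Jet n) :
    jmul a b = (a.1 * b.1, mulLeft a.1 b.2 + pullback a.2 b.1) := rfl

theorem jmul_conj_kernel {n : ℕ} (c : Arr n) (x : Jet n) :
    jmul (jmul (1, c) x) (1, -c) = (x.1, x.2 + pullback c x.1 - mulLeft x.1 c) := by
  rw [jmul_def, jmul_def]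
  simp only [one_mul, mul_one, mulLeft_one, pullback_one, mulLeft_neg]
  rw [add_comm, ← sub_eq_add_neg]

theorem isUnit_two_smul_one (n : ℕ) : IsUnit ((2 : ℝ) • (1 : Mat n)) := by
  simp [Matrix.isUnit_iff_isUnit_det]

def IsJetCocycle {n : ℕ} (Γ : Mat n → Arr n) : Prop :=
  ∀ a b : Mat n, IsUnit a → IsUnit b → Γ (a * b) = mulLeft a (Γ b) + pullback (Γ a) b

theorem isJetCocycle_snd_of_splitting {n : ℕ} {σ : Mat n → Jet n}
    (hsec : ∀ a, IsUnit a → (σ a).1 = a)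
    (hhom : ∀ a b, IsUnit a → IsUnit b → σ (a * b) = jmul (σ a) (σ b)) :
    IsJetCocycle fun a => (σ a).2 := by
  intro a b ha hb
  dsimp only
  rw [hhom a b ha hb, jmul_def, hsec a ha, hsec b hb]

def cocyclePotential {n : ℕ} (Γ : Mat n → Arr n) : Arr n :=
  (2 : ℝ)⁻¹ • Γ ((2 : ℝ) • 1)

theorem IsJetCocycle.eq_coboundary {n : ℕ} {Γ : Mat n → Arr n} (hΓ : IsJetCocycle Γ)
    {a : Mat n} (ha : IsUnit a) :
    Γ a = pullback (cocyclePotential Γ) a - mulLeft a (cocyclePotential Γ) := by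
  have hz := isUnit_two_smul_one n
  have hleft := hΓ _ a hz ha
  have hright := hΓ a _ ha hz
  rw [smul_one_mul, mulLeft_smul_one] at hleft
  rw [mul_smul_one, pullback_smul_one] at hright
  rw [cocyclePotential, pullback_smul, mulLeft_smul]
  linear_combination (norm := module) (2 : ℝ)⁻¹ • (hleft - hright)

theorem symArr_cocyclePotential {n : ℕ} {Γ : Mat n → Arr n}
    (hΓ : ∀ a, IsUnit a → SymArr (Γ a)) : SymArr (cocyclePotential Γ) := fun i j k => by
  simp [cocyclePotential, hΓ _ (isUnit_two_smul_one n) i j k]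

theorem g2_splittings_images_conjugate_general (n : ℕ)
    (σ₁ σ₂ : Mat n → Jet n)
    (h1jet : ∀ a : Mat n, IsUnit a → IsJet (σ₁ a))
    (h1sec : ∀ a : Mat n, IsUnit a → (σ₁ a).1 = a)
    (h1hom : ∀ a b : Mat n, IsUnit a → IsUnit b → σ₁ (a * b) = jmul (σ₁ a) (σ₁ b))
    (h2jet : ∀ a : Mat n, IsUnit a → IsJet (σ₂ a))
    (h2sec : ∀ a : Mat n, IsUnit a → (σ₂ a).1 = a)
    (h2hom : ∀ a b : Mat n, IsUnit a → IsUnit b → σ₂ (a * b) = jmul (σ₂ a) (σ₂ b)) :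
    ∃ c : Arr n, SymArr c ∧
      {x : Jet n | ∃ b : Mat n, IsUnit b ∧ σ₁ b = x} =
        {x : Jet n | ∃ b : Mat n, IsUnit b ∧
          x = jmul (jmul (((1 : Mat n), c) : Jet n) (σ₂ b))
                (((1 : Mat n), fun i j l => -(c i j l)) : Jet n)} := by
  have hΓ₁ := isJetCocycle_snd_of_splitting h1sec h1hom
  have hΓ₂ := isJetCocycle_snd_of_splitting h2sec h2hom
  have hc₁ := symArr_cocyclePotential fun a ha => (h1jet a ha).2
  have hc₂ := symArr_cocyclePotential fun a ha => (h2jet a ha).2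
  set c := cocyclePotential (fun a => (σ₁ a).2) - cocyclePotential (fun a => (σ₂ a).2)
  have hc : SymArr c := fun i j k => by
    simp only [c, Pi.sub_apply, hc₁ i j k, hc₂ i j k]
  have hconj : ∀ b, IsUnit b →
      σ₁ b = jmul (jmul ((1 : Mat n), c) (σ₂ b)) ((1 : Mat n), fun i j l => -(c i j l)) := by
    intro b hb
    rw [show (fun i j l => -(c i j l)) = -c from rfl, jmul_conj_kernel, h2sec b hb]
    refine Prod.ext (h1sec b hb) ?_
    dsimp only
    rw [hΓ₁.eq_coboundary hb, hΓ₂.eq_coboundary hb, pullback_sub, mulLeft_sub]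
    abel
  refine ⟨c, hc, Set.ext fun x => ⟨?_, ?_⟩⟩ <;>
  · rintro ⟨b, hb, rfl⟩
    exact ⟨b, hb, hconj b hb⟩

/-- Proposition 3: the images of any two splittings σ₁, σ₂ of π over
GL(n,ℝ) are conjugate subgroups of G₂(n) by an element k = (I,c) of the kernel
K₂,₁(n): σ₁(GL(n,ℝ)) = k · σ₂(GL(n,ℝ)) · k⁻¹. -/
theorem g2_splittings_images_conjugate (n : ℕ) (hn : 1 ≤ n)
    (σ₁ σ₂ : Mat n → Jet n)
    (h1jet : ∀ a : Mat n, IsUnit a → IsJet (σ₁ a))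
    (h1sec : ∀ a : Mat n, IsUnit a → (σ₁ a).1 = a)
    (h1hom : ∀ a b : Mat n, IsUnit a → IsUnit b → σ₁ (a * b) = jmul (σ₁ a) (σ₁ b))
    (h2jet : ∀ a : Mat n, IsUnit a → IsJet (σ₂ a))
    (h2sec : ∀ a : Mat n, IsUnit a → (σ₂ a).1 = a)
    (h2hom : ∀ a b : Mat n, IsUnit a → IsUnit b → σ₂ (a * b) = jmul (σ₂ a) (σ₂ b)) :
    ∃ c : Arr n, SymArr c ∧
      {x : Jet n | ∃ b : Mat n, IsUnit b ∧ σ₁ b = x} =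
        {x : Jet n | ∃ b : Mat n, IsUnit b ∧
          x = jmul (jmul (((1 : Mat n), c) : Jet n) (σ₂ b))
                (((1 : Mat n), fun i j l => -(c i j l)) : Jet n)} :=
  g2_splittings_images_conjugate_general n σ₁ σ₂ h1jet h1sec h1hom h2jet h2sec h2hom
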